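/- For every A ⊆ ℕ one has λ̲(A) = d̲_∞(A). -/

import Mathlib

open Filter Topology

noncomputable section

/-- The space `ℓ∞` of bounded real sequences. -/
abbrev EllInfty : Type := lp (fun _ : ℕ => ℝ) ⊤

/-- The characteristic sequence of a set `A ⊆ ℕ` (as a plain function). -/
def chiFun (A : Set ℕ) : ℕ → ℝ := A.indicator 1

lemma chiFun_memℓp (A : Set ℕ) : Memℓp (chiFun A) ⊤ := by
  apply memℓp_infty
  refine ⟨1, ?_⟩
  rintro r ⟨n, rfl⟩
  by_cases h : n ∈ A <;> simp [chiFun, Set.indicator, h]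

/-- The characteristic sequence of a set `A ⊆ ℕ` as an element of `ℓ∞`. -/
def chi (A : Set ℕ) : EllInfty := ⟨chiFun A, chiFun_memℓp A⟩

/-- `A(n) = |A ∩ {1,…,n}|` (as a real number). -/
def count (A : Set ℕ) (n : ℕ) : ℝ := ∑ k ∈ Finset.Icc 1 n, chiFun A k

/-- `A` has asymptotic density `d`, i.e. `A(n)/n → d`. -/
def HasDensity (A : Set ℕ) (d : ℝ) : Prop :=
  Tendsto (fun n => count A n / n) atTop (𝓝 d)

/-- A density measure: a finitely additive measure `μ : 𝒫(ℕ) → [0,1]` with `μ(ℕ) = 1`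
which extends the asymptotic density. -/
def IsDensityMeasure (μ : Set ℕ → ℝ) : Prop :=
  (∀ A B : Set ℕ, Disjoint A B → μ (A ∪ B) = μ A + μ B) ∧
  (∀ A : Set ℕ, μ A ∈ Set.Icc (0 : ℝ) 1) ∧
  μ Set.univ = 1 ∧
  (∀ A d, HasDensity A d → μ A = d)

/-- The sequence of Cesàro averages `(x₁ + … + xₙ)/n`. -/
def cesaroAvg (x : ℕ → ℝ) (n : ℕ) : ℝ := (∑ i ∈ Finset.Icc 1 n, x i) / n

/-- `x` has Cesàro mean `c`. -/
def HasCesaro (x : ℕ → ℝ) (c : ℝ) : Prop := Tendsto (cesaroAvg x) atTop (𝓝 c)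

/-- A functional on `ℓ∞` is positive if it is nonnegative on nonnegative sequences. -/
def IsPositiveFunctional (f : EllInfty → ℝ) : Prop :=
  ∀ x : EllInfty, (∀ n, 0 ≤ x n) → 0 ≤ f x

/-- A functional on `ℓ∞` extends the Cesàro mean. -/
def ExtendsCesaro (f : EllInfty → ℝ) : Prop :=
  ∀ (x : EllInfty) (c : ℝ), HasCesaro (⇑x) c → f x = c

/-- The set of positive continuous linear functionals on `ℓ∞` extending the Cesàro mean. -/
def Cesex : Set (EllInfty →L[ℝ] ℝ) :=
  {f | IsPositiveFunctional f ∧ ExtendsCesaro f}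

/-- `f_C(x) = sup { f(x) : f ∈ Cesex }`. -/
def fC (x : EllInfty) : ℝ := sSup ((fun f : EllInfty →L[ℝ] ℝ => f x) '' Cesex)

/-- `Θ_{θ,n}(x) = (Σ_{θn < i ≤ n} x_i) / (n(1-θ))`. -/
def Theta (x : ℕ → ℝ) (θ : ℝ) (n : ℕ) : ℝ :=
  (∑ i ∈ Finset.Icc 1 n, if θ * n < (i : ℝ) then x i else 0) / (n * (1 - θ))

/-- `Θ_θ(x) = limsup_{n → ∞} Θ_{θ,n}(x)`. -/
def ThetaSup (x : ℕ → ℝ) (θ : ℝ) : ℝ := limsup (Theta x θ) atTop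

/-- `t(x) = lim_{θ → 1⁻} Θ_θ(x)`. -/
def tFun (x : ℕ → ℝ) : ℝ := limUnder (𝓝[<] (1 : ℝ)) (ThetaSup x)

/-- `A_α(n) = Σ_{k ∈ A, k ≤ n} k^α`. -/
def aSum (A : Set ℕ) (α : ℝ) (n : ℕ) : ℝ :=
  ∑ k ∈ Finset.Icc 1 n, chiFun A k * (k : ℝ) ^ α

/-- The upper `α`-density `d̄_α(A) = limsup_{n→∞} A_α(n)/ℕ_α(n)`. -/
def upperADens (A : Set ℕ) (α : ℝ) : ℝ :=
  limsup (fun n => aSum A α n / aSum Set.univ α n) atTop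

/-- The lower `α`-density `d̲_α(A) = liminf_{n→∞} A_α(n)/ℕ_α(n)`. -/
def lowerADens (A : Set ℕ) (α : ℝ) : ℝ :=
  liminf (fun n => aSum A α n / aSum Set.univ α n) atTop

/-- `d̄_∞(A) = lim_{α→∞} d̄_α(A)`. -/
def dInftyUpper (A : Set ℕ) : ℝ := limUnder (atTop : Filter ℝ) (upperADens A)

/-- `d̲_∞(A) = lim_{α→∞} d̲_α(A)`. -/
def dInftyLower (A : Set ℕ) : ℝ := limUnder (atTop : Filter ℝ) (lowerADens A)

/-- The quotient `(A(n) - A(⌊θn⌋))/(n - θn)` appearing in the Pólya density. -/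
def polyaQuot (A : Set ℕ) (θ : ℝ) (n : ℕ) : ℝ :=
  (count A n - count A ⌊θ * n⌋₊) / (n - θ * n)

/-- The upper Pólya density `p̄(A)`. -/
def pUpper (A : Set ℕ) : ℝ :=
  limUnder (𝓝[<] (1 : ℝ)) (fun θ => limsup (polyaQuot A θ) atTop)

/-- The lower Pólya density `p̲(A)`. -/
def pLower (A : Set ℕ) : ℝ :=
  limUnder (𝓝[<] (1 : ℝ)) (fun θ => liminf (polyaQuot A θ) atTop)

/-- `λ̄(A) = sup { μ(A) : μ a density measure }`. -/
def lamUpper (A : Set ℕ) : ℝ := sSup {r | ∃ μ, IsDensityMeasure μ ∧ μ A = r}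

/-- `λ̲(A) = inf { μ(A) : μ a density measure }`. -/
def lamLower (A : Set ℕ) : ℝ := sInf {r | ∃ μ, IsDensityMeasure μ ∧ μ A = r}

/-- `d̄*(A) = inf { d(B) : B ⊇ A, B ∈ 𝒟 }`. -/
def dUpperStar (A : Set ℕ) : ℝ := sInf {r | ∃ B, A ⊆ B ∧ HasDensity B r}

/-- `d̲*(A) = sup { d(B) : B ⊆ A, B ∈ 𝒟 }`. -/
def dLowerStar (A : Set ℕ) : ℝ := sSup {r | ∃ B, B ⊆ A ∧ HasDensity B r}

/-- The `ℱ`-limit of a (bounded) real sequence along an ultrafilter `ℱ`: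
the unique `L` with `Tendsto x ℱ (𝓝 L)` (when it exists). -/
def ulim (F : Ultrafilter ℕ) (x : ℕ → ℝ) : ℝ := limUnder (F : Filter ℕ) x

/-- An ultrafilter is free (non-principal) iff it contains all cofinite sets. -/
def IsFreeUltrafilter (F : Ultrafilter ℕ) : Prop := (F : Filter ℕ) ≤ Filter.cofinite

/-- The set of positive functionals extending Cesàro mean, inside the weak-* dual of `ℓ∞`. -/
def CesexW : Set (WeakDual ℝ EllInfty) :=
  {f | (∀ x : EllInfty, (∀ n, 0 ≤ x n) → 0 ≤ f x) ∧
    ∀ (x : EllInfty) (c : ℝ), HasCesaro (⇑x) c → f x = c}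


/-!
For `α ≥ 0`, Abel summation shows that `A_α(n)/ℕ_α(n) → d(A)` whenever `A` has a density, so
any limit of these ratios along a free ultrafilter is a density measure; taking the ultrafilter
on the indices where the ratio is close to `d̲_α(A)` gives `λ̲(A) ≤ d̲_α(A)`.

Conversely, suppose `d̲_α(A) > c` for arbitrarily large `α`. The weights `k^α` put almost all of
their mass near `n`, and a minimal-point argument shows that for large `n` every window `(m, n]`
of length at least `δn` contains almost `c (n - m)` elements of `A`. The greedy subset of `A`
that keeps its counting function just below `c n` then has density `c`, so every density
measure gives `A` measure at least `c`. Hence `d̲_α(A) → λ̲(A)` as `α → ∞`.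
-/

open Finset

lemma chiFun_nonneg (A : Set ℕ) (k : ℕ) : 0 ≤ chiFun A k :=
  Set.indicator_nonneg (fun _ _ => zero_le_one) k

lemma chiFun_le_one (A : Set ℕ) (k : ℕ) : chiFun A k ≤ 1 := by
  unfold chiFun; by_cases h : k ∈ A <;> simp [h]

lemma sum_Icc_one_sub_sum_Icc_one (f : ℕ → ℝ) {m n : ℕ} (h : m ≤ n) :
    ∑ k ∈ Icc 1 n, f k - ∑ k ∈ Icc 1 m, f k = ∑ k ∈ Ioc m n, f k := by
  have hIcc (k : ℕ) : Icc 1 k = Ioc 0 k := Icc_add_one_left_eq_Ioc 0 k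
  rw [hIcc, hIcc, ← sum_Ioc_consecutive f (Nat.zero_le m) h]
  ring

lemma count_sub_count (A : Set ℕ) {m n : ℕ} (h : m ≤ n) :
    count A n - count A m = ∑ k ∈ Ioc m n, chiFun A k :=
  sum_Icc_one_sub_sum_Icc_one _ h

lemma count_succ (A : Set ℕ) (n : ℕ) : count A (n + 1) = count A n + chiFun A (n + 1) :=
  sum_Icc_succ_top (by omega) _

lemma count_mono (A : Set ℕ) : Monotone (count A) := fun m n h => by
  have := count_sub_count A h
  have : 0 ≤ ∑ k ∈ Ioc m n, chiFun A k := sum_nonneg fun k _ => chiFun_nonneg A k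
  linarith

lemma aSum_sub_aSum (A : Set ℕ) (α : ℝ) {m n : ℕ} (h : m ≤ n) :
    aSum A α n - aSum A α m = ∑ k ∈ Ioc m n, chiFun A k * (k : ℝ) ^ α :=
  sum_Icc_one_sub_sum_Icc_one _ h

lemma aSum_zero (A : Set ℕ) (α : ℝ) : aSum A α 0 = 0 := by simp [aSum]

lemma aSum_nonneg (A : Set ℕ) (α : ℝ) (n : ℕ) : 0 ≤ aSum A α n :=
  sum_nonneg fun k _ => mul_nonneg (chiFun_nonneg A k) (by positivity)

lemma aSum_le_aSum_univ (A : Set ℕ) (α : ℝ) (n : ℕ) : aSum A α n ≤ aSum Set.univ α n :=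
  sum_le_sum fun k _ => by
    simpa [chiFun] using mul_le_of_le_one_left (by positivity) (chiFun_le_one A k)

lemma aSum_univ_succ (α : ℝ) (n : ℕ) :
    aSum Set.univ α (n + 1) = aSum Set.univ α n + ((n : ℝ) + 1) ^ α := by
  simp [aSum, chiFun, sum_Icc_succ_top]

lemma aSum_univ_pos (α : ℝ) {n : ℕ} (hn : 1 ≤ n) : 0 < aSum Set.univ α n := by
  obtain ⟨n, rfl⟩ := Nat.exists_eq_add_of_le' hn
  rw [aSum_univ_succ]
  exact add_pos_of_nonneg_of_pos (aSum_nonneg _ α n) (by positivity)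

lemma aSum_union {A B : Set ℕ} (h : Disjoint A B) (α : ℝ) (n : ℕ) :
    aSum (A ∪ B) α n = aSum A α n + aSum B α n := by
  simp only [aSum, chiFun, Set.indicator_union_of_disjoint h, add_mul, sum_add_distrib]

lemma rpow_add_one_add_mul_le {α b h : ℝ} (hα : 0 ≤ α) (hb : 0 < b) (hbh : -b ≤ h) :
    b ^ (α + 1) + (α + 1) * b ^ α * h ≤ (b + h) ^ (α + 1) := by
  have hs : -1 ≤ h / b := by rw [le_div_iff₀ hb]; linarith
  have key := one_add_mul_self_le_rpow_one_add hs (by linarith : 1 ≤ α + 1)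
  calc b ^ (α + 1) + (α + 1) * b ^ α * h = b ^ (α + 1) * (1 + (α + 1) * (h / b)) := by
        rw [Real.rpow_add_one hb.ne']; field_simp
    _ ≤ b ^ (α + 1) * (1 + h / b) ^ (α + 1) := by gcongr
    _ = (b + h) ^ (α + 1) := by
        rw [← Real.mul_rpow hb.le (by linarith)]; congr 1; field_simp

lemma rpow_add_one_le_aSum_univ {α : ℝ} (hα : 0 ≤ α) (n : ℕ) :
    (n : ℝ) ^ (α + 1) ≤ (α + 1) * aSum Set.univ α n := by
  induction n with
  | zero => simp [aSum, Real.zero_rpow (by linarith : α + 1 ≠ 0)]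
  | succ n ih =>
    have := rpow_add_one_add_mul_le hα (by positivity : (0 : ℝ) < n + 1) (h := -1) (by linarith)
    rw [aSum_univ_succ]
    push_cast
    simp only [add_neg_cancel_right] at this
    linarith

lemma aSum_univ_le_rpow_add_one {α : ℝ} (hα : 0 ≤ α) (n : ℕ) :
    (α + 1) * aSum Set.univ α n ≤ ((n : ℝ) + 1) ^ (α + 1) := by
  induction n with
  | zero => simp [aSum]
  | succ n ih =>
    have := rpow_add_one_add_mul_le hα (by positivity : (0 : ℝ) < n + 1) (h := 1) (by linarith)
    rw [aSum_univ_succ]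
    push_cast
    linarith

lemma aSum_univ_le_exp_mul {α t : ℝ} (hα : 0 ≤ α) {m p : ℕ} (h : (m : ℝ) + 1 ≤ (1 - t) * p) :
    aSum Set.univ α m ≤ Real.exp (-((α + 1) * t)) * aSum Set.univ α p := by
  have ht : 0 ≤ 1 - t := by
    by_contra! ht
    nlinarith [(Nat.cast_nonneg p : (0 : ℝ) ≤ p), (Nat.cast_nonneg m : (0 : ℝ) ≤ m)]
  have hexp : (1 - t) ^ (α + 1) ≤ Real.exp (-((α + 1) * t)) := by
    calc (1 - t) ^ (α + 1) ≤ Real.exp (-t) ^ (α + 1) := by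
          gcongr; linarith [Real.add_one_le_exp (-t)]
      _ = Real.exp (-((α + 1) * t)) := by rw [← Real.exp_mul]; ring_nf
  have hα1 : 0 < α + 1 := by linarith
  refine le_of_mul_le_mul_left ?_ hα1
  calc (α + 1) * aSum Set.univ α m ≤ ((m : ℝ) + 1) ^ (α + 1) := aSum_univ_le_rpow_add_one hα m
    _ ≤ ((1 - t) * p) ^ (α + 1) := by gcongr
    _ = (1 - t) ^ (α + 1) * (p : ℝ) ^ (α + 1) := Real.mul_rpow ht (Nat.cast_nonneg p)
    _ ≤ Real.exp (-((α + 1) * t)) * ((α + 1) * aSum Set.univ α p) := by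
        gcongr
        exact rpow_add_one_le_aSum_univ hα p
    _ = (α + 1) * (Real.exp (-((α + 1) * t)) * aSum Set.univ α p) := by ring

theorem sum_Ioc_mul_le_of_forall_sum_Ioc_le {x w : ℕ → ℝ} {D : ℝ} (hw : Monotone w) (hD : 0 ≤ D)
    {m n : ℕ} (hmn : m ≤ n) (hwm : 0 ≤ w m) (hx : ∀ k, m ≤ k → k < n → ∑ j ∈ Ioc k n, x j ≤ D) :
    ∑ j ∈ Ioc m n, x j * w j ≤ D * w n := by
  obtain ⟨K, rfl⟩ := Nat.exists_eq_add_of_le hmn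
  clear hmn
  induction K generalizing m w with
  | zero => simpa using mul_nonneg hD hwm
  | succ K ih =>
    rw [show m + (K + 1) = m + 1 + K by ring] at hx ⊢
    -- lowering the weights by `w (m + 1)` kills the first term and keeps them monotone
    have hshift := ih (w := fun j => w j - w (m + 1)) (fun a b hab => by simpa using hw hab)
      (by simp) (fun k hk hkn => hx k (by omega) hkn)
    have hsplit : ∑ j ∈ Ioc m (m + 1 + K), x j * w j =
        ∑ j ∈ Ioc (m + 1) (m + 1 + K), x j * (w j - w (m + 1)) +
          w (m + 1) * ∑ j ∈ Ioc m (m + 1 + K), x j := by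
      rw [← insert_Ioc_add_one_left_eq_Ioc (by omega : m < m + 1 + K), sum_insert (by simp),
        sum_insert (by simp)]
      simp only [mul_sub, sum_sub_distrib, ← sum_mul]
      ring
    have hfirst := hx m le_rfl (by omega)
    rw [hsplit]
    nlinarith [hw (Nat.le_succ m), hw (show m + 1 ≤ m + 1 + K by omega)]

theorem neg_mul_le_sum_Ioc_mul_of_forall_neg_le_sum_Ioc {x w : ℕ → ℝ} {D : ℝ} (hw : Monotone w)
    (hD : 0 ≤ D) {m n : ℕ} (hmn : m ≤ n) (hwm : 0 ≤ w m)
    (hx : ∀ k, m ≤ k → k < n → -D ≤ ∑ j ∈ Ioc k n, x j) :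
    -(D * w n) ≤ ∑ j ∈ Ioc m n, x j * w j := by
  have := sum_Ioc_mul_le_of_forall_sum_Ioc_le (x := fun j => -x j) hw hD hmn hwm
    (fun k hk hkn => by simpa [sum_neg_distrib] using neg_le.1 (hx k hk hkn))
  simp only [neg_mul, sum_neg_distrib] at this
  linarith

lemma monotone_natCast_rpow {α : ℝ} (hα : 0 ≤ α) : Monotone fun k : ℕ => (k : ℝ) ^ α :=
  fun _ _ hab => Real.rpow_le_rpow (Nat.cast_nonneg _) (Nat.cast_le.2 hab) hα

lemma sum_Ioc_chiFun_sub (A : Set ℕ) (c : ℝ) {k n : ℕ} (h : k ≤ n) :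
    ∑ j ∈ Ioc k n, (chiFun A j - c) = count A n - count A k - c * ((n : ℝ) - k) := by
  rw [sum_sub_distrib, ← count_sub_count A h, sum_const, Nat.card_Ioc, nsmul_eq_mul,
    Nat.cast_sub h]
  ring

lemma sum_Ioc_chiFun_sub_mul_rpow (A : Set ℕ) (c α : ℝ) {m n : ℕ} (h : m ≤ n) :
    ∑ j ∈ Ioc m n, (chiFun A j - c) * (j : ℝ) ^ α =
      aSum A α n - aSum A α m - c * (aSum Set.univ α n - aSum Set.univ α m) := by
  simp only [sub_mul, sum_sub_distrib, aSum_sub_aSum _ _ h, mul_sum]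
  simp [chiFun]

lemma aSum_sub_le_of_forall_count_sub_le {A : Set ℕ} {α c D : ℝ} (hα : 0 ≤ α) (hD : 0 ≤ D)
    {m n : ℕ} (hmn : m ≤ n)
    (h : ∀ k, m ≤ k → k < n → count A n - count A k - c * ((n : ℝ) - k) ≤ D) :
    aSum A α n - aSum A α m - c * (aSum Set.univ α n - aSum Set.univ α m) ≤ D * (n : ℝ) ^ α := by
  rw [← sum_Ioc_chiFun_sub_mul_rpow A c α hmn]
  exact sum_Ioc_mul_le_of_forall_sum_Ioc_le (monotone_natCast_rpow hα) hD hmn (by positivity)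
    fun k hk hkn => (sum_Ioc_chiFun_sub A c hkn.le).trans_le (h k hk hkn)

lemma neg_mul_le_aSum_sub_of_forall_neg_le_count_sub {A : Set ℕ} {α c D : ℝ} (hα : 0 ≤ α)
    (hD : 0 ≤ D) {m n : ℕ} (hmn : m ≤ n)
    (h : ∀ k, m ≤ k → k < n → -D ≤ count A n - count A k - c * ((n : ℝ) - k)) :
    -(D * (n : ℝ) ^ α) ≤
      aSum A α n - aSum A α m - c * (aSum Set.univ α n - aSum Set.univ α m) := by
  rw [← sum_Ioc_chiFun_sub_mul_rpow A c α hmn]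
  exact neg_mul_le_sum_Ioc_mul_of_forall_neg_le_sum_Ioc (monotone_natCast_rpow hα) hD hmn
    (by positivity) fun k hk hkn => (h k hk hkn).trans_eq (sum_Ioc_chiFun_sub A c hkn.le).symm

lemma eventually_forall_abs_le_mul_of_tendsto {f : ℕ → ℝ}
    (hf : Tendsto (fun n => f n / n) atTop (𝓝 0)) {ε : ℝ} (hε : 0 < ε) :
    ∀ᶠ n : ℕ in atTop, ∀ m ≤ n, |f m| ≤ ε * n := by
  obtain ⟨N, hN⟩ := eventually_atTop.1
    ((hf.eventually (Metric.ball_mem_nhds 0 hε)).and (eventually_gt_atTop 0))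
  have hlarge (m : ℕ) (hm : N ≤ m) : |f m| ≤ ε * m := by
    obtain ⟨hball, hpos⟩ := hN m hm
    rw [Real.dist_eq, sub_zero, abs_div, Nat.abs_cast,
      div_lt_iff₀ (by exact_mod_cast hpos)] at hball
    exact hball.le
  filter_upwards [eventually_ge_atTop N,
    (tendsto_natCast_atTop_atTop.const_mul_atTop hε).eventually_ge_atTop (∑ m ∈ range N, |f m|)]
    with n hn hC m hm
  rcases lt_or_ge m N with hmN | hmN
  · exact (single_le_sum (fun i _ => abs_nonneg (f i)) (mem_range.2 hmN)).trans hC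
  · exact (hlarge m hmN).trans (by gcongr)

def aSumRatio (A : Set ℕ) (α : ℝ) (n : ℕ) : ℝ := aSum A α n / aSum Set.univ α n

lemma aSumRatio_mem_Icc (A : Set ℕ) (α : ℝ) (n : ℕ) : aSumRatio A α n ∈ Set.Icc 0 1 := by
  rcases Nat.eq_zero_or_pos n with rfl | hn
  · simp [aSumRatio, aSum]
  have hN := aSum_univ_pos α hn
  exact ⟨div_nonneg (aSum_nonneg A α n) hN.le, (div_le_one hN).2 (aSum_le_aSum_univ A α n)⟩

lemma natCast_mul_rpow_le_aSum_univ {α : ℝ} (hα : 0 ≤ α) (n : ℕ) :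
    (n : ℝ) * (n : ℝ) ^ α ≤ (α + 1) * aSum Set.univ α n := by
  rw [mul_comm, ← Real.rpow_add_one' (Nat.cast_nonneg n) (by linarith)]
  exact rpow_add_one_le_aSum_univ hα n

lemma abs_aSum_sub_mul_le_of_forall_abs_count_sub_le {A : Set ℕ} {α c D : ℝ} (hα : 0 ≤ α)
    (hD : 0 ≤ D) {n : ℕ} (h : ∀ k < n, |count A n - count A k - c * ((n : ℝ) - k)| ≤ D) :
    |aSum A α n - c * aSum Set.univ α n| ≤ D * (n : ℝ) ^ α := by
  have hup := aSum_sub_le_of_forall_count_sub_le hα hD (Nat.zero_le n)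
    fun k _ hk => (abs_le.1 (h k hk)).2
  have hlo := neg_mul_le_aSum_sub_of_forall_neg_le_count_sub hα hD (Nat.zero_le n)
    fun k _ hk => (abs_le.1 (h k hk)).1
  simp only [aSum_zero, sub_zero] at hup hlo
  exact abs_le.2 ⟨hlo, hup⟩

lemma tendsto_aSumRatio_of_hasDensity {X : Set ℕ} {d α : ℝ} (hX : HasDensity X d)
    (hα : 0 ≤ α) : Tendsto (aSumRatio X α) atTop (𝓝 d) := by
  set f : ℕ → ℝ := fun n => count X n - d * n
  have hf : Tendsto (fun n => f n / n) atTop (𝓝 0) := by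
    refine (sub_self d ▸ hX.sub_const d).congr' ?_
    filter_upwards [eventually_ne_atTop 0] with n hn
    simp only [f]
    field_simp
  rw [Metric.tendsto_nhds]
  intro ε hε
  set η := ε / (4 * (α + 1)) with hη
  filter_upwards [eventually_forall_abs_le_mul_of_tendsto hf (by positivity : 0 < η),
    eventually_gt_atTop 0] with n hf_le hn
  have hclose := abs_aSum_sub_mul_le_of_forall_abs_count_sub_le (A := X) (c := d) hα
    (by positivity : 0 ≤ 2 * η * n) fun k hk =>
      calc |count X n - count X k - d * ((n : ℝ) - k)| = |f n - f k| := by simp only [f]; ring_nf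
        _ ≤ |f n| + |f k| := abs_sub _ _
        _ ≤ 2 * η * n := by linarith [hf_le n le_rfl, hf_le k hk.le]
  have hN := aSum_univ_pos α hn
  have hsmall : 2 * η * n * (n : ℝ) ^ α < ε * aSum Set.univ α n :=
    calc 2 * η * n * (n : ℝ) ^ α = 2 * η * ((n : ℝ) * (n : ℝ) ^ α) := by ring
      _ ≤ 2 * η * ((α + 1) * aSum Set.univ α n) :=
        mul_le_mul_of_nonneg_left (natCast_mul_rpow_le_aSum_univ hα n) (by positivity)
      _ = ε / 2 * aSum Set.univ α n := by rw [hη]; field_simp; ring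
      _ < ε * aSum Set.univ α n := by linarith [mul_pos hε hN]
  rw [Real.dist_eq, aSumRatio, div_sub' hN.ne', abs_div, abs_of_pos hN, div_lt_iff₀ hN,
    mul_comm (aSum Set.univ α n) d]
  exact hclose.trans_lt hsmall

lemma hasDensity_univ : HasDensity Set.univ 1 := by
  refine tendsto_const_nhds.congr' ?_
  filter_upwards [eventually_ne_atTop 0] with n hn
  have : count Set.univ n = n := by simp [count, chiFun]
  rw [this, div_self (Nat.cast_ne_zero.2 hn)]

lemma hasDensity_empty : HasDensity ∅ 0 := by
  simp [HasDensity, count, chiFun]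

lemma IsDensityMeasure.mono {μ : Set ℕ → ℝ} (hμ : IsDensityMeasure μ) {X Y : Set ℕ}
    (h : X ⊆ Y) : μ X ≤ μ Y := by
  rw [← Set.union_sdiff_cancel h, hμ.1 X (Y \ X) Set.disjoint_sdiff_right]
  linarith [(hμ.2.1 (Y \ X)).1]

lemma IsDensityMeasure.lamLower_le {μ : Set ℕ → ℝ} (hμ : IsDensityMeasure μ) (A : Set ℕ) :
    lamLower A ≤ μ A := by
  refine csInf_le ⟨0, ?_⟩ ⟨μ, hμ, rfl⟩
  rintro _ ⟨ν, hν, rfl⟩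
  exact (hν.2.1 A).1

lemma isFreeUltrafilter_iff {U : Ultrafilter ℕ} : IsFreeUltrafilter U ↔ (U : Filter ℕ) ≤ atTop := by
  rw [IsFreeUltrafilter, Nat.cofinite_eq_atTop]

lemma tendsto_ulim_aSumRatio (U : Ultrafilter ℕ) (X : Set ℕ) (α : ℝ) :
    Tendsto (aSumRatio X α) U (𝓝 (ulim U (aSumRatio X α))) := by
  obtain ⟨c, -, hc⟩ := isCompact_Icc.ultrafilter_le_nhds (U.map (aSumRatio X α))
    (le_principal_iff.2 (Ultrafilter.mem_map.2 (univ_mem' fun n => aSumRatio_mem_Icc X α n)))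
  exact tendsto_nhds_limUnder ⟨c, hc⟩

lemma isDensityMeasure_ulim {U : Ultrafilter ℕ} (hU : IsFreeUltrafilter U) {α : ℝ} (hα : 0 ≤ α) :
    IsDensityMeasure fun X => ulim U (aSumRatio X α) := by
  have hdens (X : Set ℕ) (d : ℝ) (hX : HasDensity X d) : ulim U (aSumRatio X α) = d :=
    tendsto_nhds_unique (tendsto_ulim_aSumRatio U X α)
      ((tendsto_aSumRatio_of_hasDensity hX hα).mono_left (isFreeUltrafilter_iff.1 hU))
  refine ⟨fun X Y hXY => ?_, fun X => ?_, hdens _ _ hasDensity_univ, hdens⟩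
  · have hadd : aSumRatio (X ∪ Y) α = aSumRatio X α + aSumRatio Y α :=
      funext fun n => by simp [aSumRatio, aSum_union hXY, add_div]
    refine tendsto_nhds_unique (tendsto_ulim_aSumRatio U _ α) ?_
    rw [hadd]
    exact (tendsto_ulim_aSumRatio U X α).add (tendsto_ulim_aSumRatio U Y α)
  · exact isClosed_Icc.mem_of_tendsto (tendsto_ulim_aSumRatio U X α)
      (Eventually.of_forall (aSumRatio_mem_Icc X α))

lemma le_lamLower_of_subset_hasDensity {A B : Set ℕ} {c : ℝ} (hBA : B ⊆ A)
    (hB : HasDensity B c) : c ≤ lamLower A := by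
  have hfree : IsFreeUltrafilter (Ultrafilter.of atTop) :=
    isFreeUltrafilter_iff.2 (Ultrafilter.of_le atTop)
  refine le_csInf ⟨_, _, isDensityMeasure_ulim hfree le_rfl, rfl⟩ ?_
  rintro _ ⟨μ, hμ, rfl⟩
  exact (hμ.2.2.2 B c hB).symm.trans_le (hμ.mono hBA)

lemma lamLower_le_lowerADens (A : Set ℕ) {α : ℝ} (hα : 0 ≤ α) :
    lamLower A ≤ lowerADens A α := by
  refine le_of_forall_gt_imp_ge_of_dense fun b hb => ?_
  have hfreq : ∃ᶠ n in atTop, aSumRatio A α n < b :=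
    frequently_lt_of_liminf_lt
      (isBoundedUnder_of ⟨1, fun n => (aSumRatio_mem_Icc A α n).2⟩).isCoboundedUnder_ge hb
  have : (atTop ⊓ 𝓟 {n | aSumRatio A α n < b}).NeBot := frequently_mem_iff_neBot.1 hfreq
  obtain ⟨U, hU⟩ := Ultrafilter.exists_le (atTop ⊓ 𝓟 {n | aSumRatio A α n < b})
  have hμ := isDensityMeasure_ulim (isFreeUltrafilter_iff.2 (hU.trans inf_le_left)) hα
  exact (hμ.lamLower_le A).trans <| le_of_tendsto (tendsto_ulim_aSumRatio U A α)
    (Eventually.mono (le_principal_iff.1 (hU.trans inf_le_right)) fun n hn => le_of_lt hn)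

def LowerWindowBound (A : Set ℕ) (c δ : ℝ) : Prop :=
  ∀ᶠ n : ℕ in atTop, ∀ m ≤ n, δ * n ≤ (n : ℝ) - m → c * ((n : ℝ) - m) ≤ count A n - count A m

lemma exists_count_sub_le_of_count_sub_lt (A : Set ℕ) {c η : ℝ} {m n : ℕ} (hc : c + η ≤ 1)
    (hmn : m ≤ n) (h : count A n - count A m < c * ((n : ℝ) - m)) :
    ∃ p, m ≤ p ∧ p ≤ n ∧ η * ((n : ℝ) - m) < (p : ℝ) - m ∧
      ∀ k, m ≤ k → k < p → count A p - count A k - (c + η) * ((p : ℝ) - k) ≤ 0 := by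
  obtain ⟨p, hp, hmin⟩ := exists_min_image (Icc m n) (fun k => count A k - (c + η) * k)
    ⟨m, left_mem_Icc.2 hmn⟩
  obtain ⟨hmp, hpn⟩ := mem_Icc.1 hp
  have hpm : (m : ℝ) ≤ p := by exact_mod_cast hmp
  have hnp := hmin n (right_mem_Icc.2 hmn)
  have hcount := count_mono A hmp
  refine ⟨p, hmp, hpn, ?_, fun k hmk hkp => ?_⟩
  · nlinarith [mul_nonneg (sub_nonneg.2 hc) (sub_nonneg.2 hpm)]
  · have := hmin k (mem_Icc.2 ⟨hmk, by omega⟩)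
    linarith

lemma lowerWindowBound_of_eventually_le_aSum {A : Set ℕ} {c η δ α : ℝ} (hη : 0 < η)
    (hδ : 0 < δ) (hα : 0 ≤ α) (hc : c + η ≤ 1) (hexp : Real.exp (-((α + 1) * (η * δ / 2))) < η)
    (h : ∀ᶠ n : ℕ in atTop, (c + 2 * η) * aSum Set.univ α n ≤ aSum A α n) :
    LowerWindowBound A c δ := by
  obtain ⟨N, hN⟩ := eventually_atTop.1 h
  have hηδ : 0 < η * δ := mul_pos hη hδ
  filter_upwards [(tendsto_natCast_atTop_atTop.const_mul_atTop hηδ).eventually_ge_atTop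
    (N + 2 / (η * δ))] with n hn m hmn hlong
  by_contra! hbad
  have hc0 : 0 < c := by nlinarith [count_mono A hmn, (Nat.cast_le (α := ℝ)).2 hmn]
  obtain ⟨p, hmp, hpn, hlen, hsuffix⟩ := exists_count_sub_le_of_count_sub_lt A hc hmn hbad
  have hpn' : (p : ℝ) ≤ n := by exact_mod_cast hpn
  have hp : η * δ * n < p := by nlinarith [(Nat.cast_nonneg m : (0 : ℝ) ≤ m)]
  have hηδp : 2 < η * δ * p := by
    have : 2 / (η * δ) < p := by linarith [(Nat.cast_nonneg N : (0 : ℝ) ≤ N)]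
    rwa [div_lt_iff₀' hηδ] at this
  have hpN : N ≤ p := by
    have : (N : ℝ) < p := by linarith [div_pos two_pos hηδ]
    exact_mod_cast this.le
  have hm : (m : ℝ) + 1 ≤ (1 - η * δ / 2) * p := by
    nlinarith [mul_le_mul_of_nonneg_left hlong hη.le, mul_le_mul_of_nonneg_left hpn' hηδ.le]
  have hNp : 0 < aSum Set.univ α p :=
    aSum_univ_pos α (by exact_mod_cast (show (0 : ℝ) < p by nlinarith))
  -- `A` is sparse on every suffix of `(m, p]`, so by Abel summation
  -- `A_α(p) ≤ (c + η) ℕ_α(p) + (1 - c - η) ℕ_α(m)`, while `ℕ_α(m) < η ℕ_α(p)`.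
  have habel := aSum_sub_le_of_forall_count_sub_le hα le_rfl hmp hsuffix
  have hsmall := aSum_univ_le_exp_mul hα hm
  have hmass : (1 - (c + η)) * aSum Set.univ α m ≤ aSum Set.univ α m := by
    nlinarith [aSum_nonneg Set.univ α m]
  nlinarith [aSum_le_aSum_univ A α m, hN p hpN, mul_lt_mul_of_pos_right hexp hNp]

open Classical in
def greedyCount (A : Set ℕ) (c : ℝ) : ℕ → ℝ
  | 0 => 0
  | n + 1 => greedyCount A c n + if n + 1 ∈ A ∧ greedyCount A c n < c * (n + 1) then 1 else 0

def greedySet (A : Set ℕ) (c : ℝ) : Set ℕ :=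
  {k | 0 < k ∧ k ∈ A ∧ greedyCount A c (k - 1) < c * k}

lemma greedySet_subset (A : Set ℕ) (c : ℝ) : greedySet A c ⊆ A := fun _ hk => hk.2.1

lemma count_greedySet (A : Set ℕ) (c : ℝ) (n : ℕ) :
    count (greedySet A c) n = greedyCount A c n := by
  induction n with
  | zero => simp [count, greedyCount]
  | succ n ih =>
    rw [count_succ, ih, greedyCount]
    have hmem : n + 1 ∈ greedySet A c ↔ n + 1 ∈ A ∧ greedyCount A c n < c * (n + 1) := by
      simp [greedySet]
    by_cases h : n + 1 ∈ A ∧ greedyCount A c n < c * (n + 1)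
    · simp [chiFun, hmem.2 h, h]
    · simp [chiFun, mt hmem.1 h, h]

lemma greedyCount_mono (A : Set ℕ) (c : ℝ) : Monotone (greedyCount A c) :=
  monotone_nat_of_le_succ fun n => by
    rw [greedyCount]
    split_ifs <;> linarith

lemma greedyCount_succ_of_lt {A : Set ℕ} {c : ℝ} {n : ℕ} (h : greedyCount A c n < c * (n + 1)) :
    greedyCount A c (n + 1) = greedyCount A c n + chiFun A (n + 1) := by
  by_cases hA : n + 1 ∈ A <;> simp [greedyCount, chiFun, hA, h]

lemma greedyCount_le (A : Set ℕ) {c : ℝ} (hc : 0 ≤ c) (n : ℕ) : greedyCount A c n ≤ c * n + 1 := by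
  induction n with
  | zero => simp [greedyCount]
  | succ n ih =>
    rw [greedyCount]
    push_cast
    split_ifs with h
    · linarith [h.2]
    · nlinarith

lemma le_greedyCount (A : Set ℕ) {c δ : ℝ} (hc : c ≤ 1) (hδ : 0 ≤ δ) {n : ℕ}
    (hW : ∀ m ≤ n, δ * n ≤ (n : ℝ) - m → c * ((n : ℝ) - m) ≤ count A n - count A m) :
    c * n - δ * n - 1 ≤ greedyCount A c n := by
  classical
  set P : ℕ → Prop := fun k => c * k - 1 ≤ greedyCount A c k
  set m := Nat.findGreatest P n
  have hPm : P m := Nat.findGreatest_spec (P := P) (Nat.zero_le n) (by simp [P, greedyCount])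
  have hmn : m ≤ n := Nat.findGreatest_le n
  -- after the last time `m` with `c m - 1 ≤ greedyCount A c m`, the count stays below `c k`,
  -- so every element of `A` is taken
  have htaken : ∀ k, m ≤ k → k ≤ n →
      greedyCount A c m + (count A k - count A m) ≤ greedyCount A c k := by
    intro k hmk hkn
    induction k, hmk using Nat.le_induction with
    | base => simp
    | succ k hmk ih =>
      have hk : greedyCount A c (k + 1) < c * (k + 1) - 1 := by
        have := Nat.findGreatest_is_greatest (P := P) (by omega : m < k + 1) hkn
        simp only [P, not_le, Nat.cast_succ] at this
        exact this
      have hmono := greedyCount_mono A c (Nat.le_succ k)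
      rw [greedyCount_succ_of_lt (by linarith), count_succ]
      linarith [ih (by omega)]
  have hfin := htaken n hmn le_rfl
  have hPm' : c * m - 1 ≤ greedyCount A c m := hPm
  rcases le_or_gt (δ * n) ((n : ℝ) - m) with hlong | hshort
  · nlinarith [hW m hmn hlong, (Nat.cast_nonneg n : (0 : ℝ) ≤ n)]
  · have hnm : (m : ℝ) ≤ n := by exact_mod_cast hmn
    nlinarith [count_mono A hmn, mul_le_mul_of_nonneg_right hc (sub_nonneg.2 hnm)]

lemma hasDensity_greedySet (A : Set ℕ) {c : ℝ} (hc0 : 0 ≤ c) (hc1 : c ≤ 1)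
    (hW : ∀ δ > 0, LowerWindowBound A c δ) : HasDensity (greedySet A c) c := by
  have hlarge (r : ℝ) (hr : 0 < r) : ∀ᶠ n : ℕ in atTop, 1 < r * n :=
    (tendsto_natCast_atTop_atTop.const_mul_atTop hr).eventually_gt_atTop 1
  simp only [HasDensity, count_greedySet]
  refine tendsto_order.2 ⟨fun a ha => ?_, fun b hb => ?_⟩
  · filter_upwards [hW ((c - a) / 2) (by linarith), hlarge ((c - a) / 2) (by linarith),
      eventually_gt_atTop 0] with n hn hn1 hn0
    have := le_greedyCount A hc1 (δ := (c - a) / 2) (by linarith) hn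
    rw [lt_div_iff₀ (by exact_mod_cast hn0)]
    nlinarith
  · filter_upwards [hlarge (b - c) (by linarith), eventually_gt_atTop 0] with n hn1 hn0
    rw [div_lt_iff₀ (by exact_mod_cast hn0)]
    nlinarith [greedyCount_le A hc0 n]

lemma lowerADens_le_one (A : Set ℕ) (α : ℝ) : lowerADens A α ≤ 1 :=
  liminf_le_of_frequently_le (Frequently.of_forall fun n => (aSumRatio_mem_Icc A α n).2)
    (isBoundedUnder_of ⟨0, fun n => (aSumRatio_mem_Icc A α n).1⟩)

lemma le_lamLower_of_frequently_lt (A : Set ℕ) {c : ℝ}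
    (h : ∃ᶠ α in atTop, c < lowerADens A α) : c ≤ lamLower A := by
  refine le_of_forall_lt_imp_le_of_dense fun c' hc' => ?_
  rcases le_or_gt c' 0 with hc'0 | hc'0
  · exact hc'0.trans (le_lamLower_of_subset_hasDensity (Set.empty_subset A) hasDensity_empty)
  obtain ⟨β, hβ⟩ := h.exists
  have hc1 : c ≤ 1 := hβ.le.trans (lowerADens_le_one A β)
  set η := (c - c') / 2 with hη_def
  have hη : 0 < η := by linarith
  refine le_lamLower_of_subset_hasDensity (greedySet_subset A c')
    (hasDensity_greedySet A hc'0.le (by linarith) fun δ hδ => ?_)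
  have hlarge : Tendsto (fun α : ℝ => (α + 1) * (η * δ / 2)) atTop atTop :=
    (tendsto_atTop_add_const_right _ 1 tendsto_id).atTop_mul_const (by positivity)
  obtain ⟨α, hα, hα0, hexp⟩ := (h.and_eventually ((eventually_ge_atTop 0).and
    ((Real.tendsto_exp_neg_atTop_nhds_zero.comp hlarge).eventually (gt_mem_nhds hη)))).exists
  refine lowerWindowBound_of_eventually_le_aSum hη hδ hα0 (by linarith) hexp ?_
  filter_upwards [eventually_lt_of_lt_liminf hα
    (isBoundedUnder_of ⟨0, fun n => (aSumRatio_mem_Icc A α n).1⟩), eventually_gt_atTop 0]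
    with n hn hn0
  rw [show c' + 2 * η = c by rw [hη_def]; ring]
  exact ((lt_div_iff₀ (aSum_univ_pos α hn0)).1 hn).le

/-- For every `A ⊆ ℕ` one has `λ̲(A) = d̲_∞(A)`. -/
theorem stmt9 (A : Set ℕ) : lamLower A = dInftyLower A := by
  refine (Tendsto.limUnder_eq (tendsto_order.2 ⟨fun a ha => ?_, fun b hb => ?_⟩)).symm
  · filter_upwards [eventually_ge_atTop 0] with α hα
    exact ha.trans_le (lamLower_le_lowerADens A hα)
  · by_contra h
    have hfreq : ∃ᶠ α in atTop, (lamLower A + b) / 2 < lowerADens A α :=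
      (not_eventually.1 h).mono fun α hα => by linarith [not_lt.1 hα]
    linarith [le_lamLower_of_frequently_lt A hfreq]
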